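/- Let T > 0, m ≥ 0, let A₀, A₁ : ℝ × [0,T] → ℝ be continuous, and let u, v : ℝ × [0,T] → ℂ be C¹ solutions of the Dirac system (∂_t + ∂_x)u = −imv + i(A₀+A₁)u + 2i|v|²u + 2i Re(u v̄)v and (∂_t − ∂_x)v = −imu + i(A₀−A₁)v + 2i|u|²v + 2i Re(u v̄)u. Then for every x ∈ ℝ and every t ∈ [0,T], ∫₀^t 2|u(x+t−s, s)|² ds + ∫₀^t 2|v(x−t+s, s)|² ds = ∫_{x−t}^{x+t} (|u(y,0)|² + |v(y,0)|²) dy. -/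

import Mathlib

/-!
With `ρ = |u|² + |v|²` and `j = |u|² - |v|²`, the Dirac system implies the conservation law
`∂ₜρ + ∂ₓj = 0`, because the right-hand sides `F_u`, `F_v` make `ū F_u + v̄ F_v` purely
imaginary. For the mass `M(s) = ∫_{x-(t-s)}^{x+(t-s)} ρ(y, s) dy` of a slice of the backward
light cone, the flux through the two moving endpoints combines with the boundary terms of the
moving limits to
`M'(s) = -(ρ + j)(x + t - s, s) - (ρ - j)(x - t + s, s) = -2|u(x+t-s, s)|² - 2|v(x-t+s, s)|²`;
integrating over `[0, t]` and using `M(t) = 0` gives the identity. To differentiate under the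
integral sign with fixed limits, `M(s)` is written as `(t - s) ∫_{-1}^{1} ρ(x + (t - s)θ, s) dθ`.
-/

open MeasureTheory Set

/-- The Dirac (spinor) part of the Maxwell–Dirac–Thirring–Gross–Neveu system on the
time slab `ℝ × [0,T]`, in null-coordinate form, with all coupling constants equal to `1`
and mass `m`:
`(∂_t + ∂_x)u = −imv + i(A₀+A₁)u + 2i|v|²u + 2i Re(u v̄)v`,
`(∂_t − ∂_x)v = −imu + i(A₀−A₁)v + 2i|u|²v + 2i Re(u v̄)u`. -/
def DiracSystem (m T : ℝ) (A₀ A₁ : ℝ → ℝ → ℝ) (u v : ℝ → ℝ → ℂ) : Prop :=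
  ∀ x : ℝ, ∀ t ∈ Set.Icc (0:ℝ) T,
    (deriv (fun τ => u x τ) t + deriv (fun ξ => u ξ t) x =
      -Complex.I * (m : ℂ) * v x t
      + Complex.I * ((A₀ x t + A₁ x t : ℝ) : ℂ) * u x t
      + 2 * Complex.I * ((‖v x t‖ ^ 2 : ℝ) : ℂ) * u x t
      + 2 * Complex.I * (((u x t * (starRingEnd ℂ) (v x t)).re : ℝ) : ℂ) * v x t)
    ∧
    (deriv (fun τ => v x τ) t - deriv (fun ξ => v ξ t) x =
      -Complex.I * (m : ℂ) * u x t
      + Complex.I * ((A₀ x t - A₁ x t : ℝ) : ℂ) * v x t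
      + 2 * Complex.I * ((‖u x t‖ ^ 2 : ℝ) : ℂ) * v x t
      + 2 * Complex.I * (((u x t * (starRingEnd ℂ) (v x t)).re : ℝ) : ℂ) * u x t)

theorem ContinuousLinearMap.apply_pair {F : Type*} [NormedAddCommGroup F] [NormedSpace ℝ F]
    (L : ℝ × ℝ →L[ℝ] F) (a b : ℝ) : L (a, b) = a • L (1, 0) + b • L (0, 1) := by
  rw [← map_smul, ← map_smul, ← map_add]
  simp

theorem hasDerivAt_intervalIntegral_of_continuous {E : Type*} [NormedAddCommGroup E]
    [NormedSpace ℝ E] {F F' : ℝ → ℝ → E}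
    (hF : Continuous (Function.uncurry F)) (hF' : Continuous (Function.uncurry F'))
    (hderiv : ∀ s θ, HasDerivAt (fun s => F s θ) (F' s θ) s) (a b s₀ : ℝ) :
    HasDerivAt (fun s => ∫ θ in a..b, F s θ) (∫ θ in a..b, F' s₀ θ) s₀ := by
  have slice {G : ℝ → ℝ → E} (hG : Continuous (Function.uncurry G)) (s : ℝ) :
      Continuous (G s) :=
    hG.comp (Continuous.prodMk_right s)
  obtain ⟨C, hC⟩ := ((isCompact_closedBall s₀ 1).prod isCompact_uIcc).exists_bound_of_continuousOn
    hF'.continuousOn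
  refine (intervalIntegral.hasDerivAt_integral_of_dominated_loc_of_deriv_le (bound := fun _ => C)
    (Metric.closedBall_mem_nhds s₀ one_pos) (.of_forall fun s => (slice hF s).aestronglyMeasurable)
    ((slice hF s₀).intervalIntegrable a b) (slice hF' s₀).aestronglyMeasurable ?_
    intervalIntegrable_const (.of_forall fun θ _ s _ => hderiv s θ)).2
  exact .of_forall fun θ hθ s hs => hC (s, θ) ⟨hs, uIoc_subset_uIcc hθ⟩

section ConservationLaw

variable {ρ j : ℝ × ℝ → ℝ} (hρ : ContDiff ℝ 1 ρ) (hj : ContDiff ℝ 1 j)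
include hρ hj

theorem mul_integral_fderiv_eq_of_conservation (x c s : ℝ)
    (hcons : ∀ y, fderiv ℝ ρ (y, s) (0, 1) + fderiv ℝ j (y, s) (1, 0) = 0) :
    c * ∫ θ in (-1:ℝ)..1, fderiv ℝ ρ (x + c * θ, s) (-θ, 1)
      = (∫ θ in (-1:ℝ)..1, ρ (x + c * θ, s))
        - (ρ (x + c, s) + j (x + c, s)) - (ρ (x - c, s) - j (x - c, s)) := by
  set q : ℝ → ℝ × ℝ := fun θ => (x + c * θ, s)
  have hq : ∀ θ, HasDerivAt q (c, 0) θ := fun θ => by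
    simpa using (((hasDerivAt_id θ).const_mul c).const_add x).prodMk (hasDerivAt_const θ s)
  have hρq_cont : Continuous fun θ => ρ (q θ) := hρ.continuous.comp (by fun_prop)
  -- `K` is chosen so that the conservation law gives `c (∂ₛ - θ ∂ᵧ) ρ = ρ - ∂_θ K` on the segment.
  set K : ℝ → ℝ := fun θ => θ * ρ (q θ) + j (q θ)
  set K' : ℝ → ℝ := fun θ => ρ (q θ) + θ * fderiv ℝ ρ (q θ) (c, 0) + fderiv ℝ j (q θ) (c, 0)
  have hK : ∀ θ, HasDerivAt K (K' θ) θ := fun θ => by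
    have hρq := (hρ.differentiable one_ne_zero (q θ)).hasFDerivAt.comp_hasDerivAt θ (hq θ)
    have hjq := (hj.differentiable one_ne_zero (q θ)).hasFDerivAt.comp_hasDerivAt θ (hq θ)
    exact (((hasDerivAt_id θ).mul hρq).add hjq).congr_deriv (by simp [K'])
  have hK'_cont : Continuous K' := by
    have hDρ := hρ.continuous_fderiv one_ne_zero
    have hDj := hj.continuous_fderiv one_ne_zero
    have := hρ.continuous
    fun_prop
  have hpointwise : ∀ θ, c * fderiv ℝ ρ (q θ) (-θ, 1) = ρ (q θ) - K' θ := fun θ => by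
    simp only [K', q]
    rw [ContinuousLinearMap.apply_pair _ (-θ), ContinuousLinearMap.apply_pair _ c,
      ContinuousLinearMap.apply_pair (fderiv ℝ j _) c]
    simp only [smul_eq_mul]
    linear_combination c * hcons (x + c * θ)
  calc c * ∫ θ in (-1:ℝ)..1, fderiv ℝ ρ (q θ) (-θ, 1)
      = ∫ θ in (-1:ℝ)..1, (ρ (q θ) - K' θ) := by
        rw [← intervalIntegral.integral_const_mul]
        exact intervalIntegral.integral_congr fun θ _ => hpointwise θ
    _ = (∫ θ in (-1:ℝ)..1, ρ (q θ)) - (K 1 - K (-1)) := by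
        rw [intervalIntegral.integral_sub (hρq_cont.intervalIntegrable _ _)
          (hK'_cont.intervalIntegrable _ _),
          intervalIntegral.integral_eq_sub_of_hasDerivAt (fun θ _ => hK θ)
          (hK'_cont.intervalIntegrable _ _)]
    _ = _ := by
        simp only [K, q, mul_one, mul_neg, ← sub_eq_add_neg]
        ring

theorem hasDerivAt_lightCone_mass (x t s : ℝ)
    (hcons : ∀ y, fderiv ℝ ρ (y, s) (0, 1) + fderiv ℝ j (y, s) (1, 0) = 0) :
    HasDerivAt (fun s => (t - s) * ∫ θ in (-1:ℝ)..1, ρ (x + (t - s) * θ, s))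
      (-(ρ (x + t - s, s) + j (x + t - s, s)) - (ρ (x - t + s, s) - j (x - t + s, s))) s := by
  have hpath : ∀ θ s, HasDerivAt (fun s => (x + (t - s) * θ, s)) (-θ, 1) s := fun θ s => by
    simpa using ((((hasDerivAt_id s).const_sub t).mul_const θ).const_add x).prodMk
      (hasDerivAt_id s)
  have hmass := hasDerivAt_intervalIntegral_of_continuous
    (F := fun s θ => ρ (x + (t - s) * θ, s))
    (F' := fun s θ => fderiv ℝ ρ (x + (t - s) * θ, s) (-θ, 1))
    (hρ.continuous.comp (by fun_prop))
    (((hρ.continuous_fderiv one_ne_zero).comp (by fun_prop)).clm_apply (by fun_prop))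
    (fun s θ => (hρ.differentiable one_ne_zero _).hasFDerivAt.comp_hasDerivAt s (hpath θ s))
    (-1) 1 s
  have hflux := mul_integral_fderiv_eq_of_conservation hρ hj x (t - s) s hcons
  refine (((hasDerivAt_id s).const_sub t).mul hmass).congr_deriv ?_
  rw [id, hflux, ← add_sub_assoc x t s, ← sub_add x t s]
  ring

theorem integral_lightCone_eq_of_conservation {x t : ℝ} (ht : 0 ≤ t)
    (hcons : ∀ y, ∀ s ∈ Icc 0 t, fderiv ℝ ρ (y, s) (0, 1) + fderiv ℝ j (y, s) (1, 0) = 0) :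
    (∫ s in (0:ℝ)..t, (ρ (x + t - s, s) + j (x + t - s, s)))
      + (∫ s in (0:ℝ)..t, (ρ (x - t + s, s) - j (x - t + s, s)))
      = ∫ y in (x - t)..(x + t), ρ (y, 0) := by
  have hρc := hρ.continuous
  have hjc := hj.continuous
  have hFTC := intervalIntegral.integral_eq_sub_of_hasDerivAt
    (fun s hs => (hasDerivAt_lightCone_mass hρ hj x t s
      fun y => hcons y s (uIcc_of_le ht ▸ hs)).neg)
    (Continuous.intervalIntegrable (by fun_prop) _ _)
  have hinitial : t * ∫ θ in (-1:ℝ)..1, ρ (x + t * θ, 0) = ∫ y in (x - t)..(x + t), ρ (y, 0) := by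
    simpa [add_comm, sub_eq_add_neg] using
      intervalIntegral.smul_integral_comp_mul_add (fun y => ρ (y, 0)) t x (a := -1) (b := 1)
  rw [← intervalIntegral.integral_add (Continuous.intervalIntegrable (by fun_prop) _ _)
    (Continuous.intervalIntegrable (by fun_prop) _ _), ← hinitial]
  convert hFTC using 1
  · congr 1 with s
    ring
  · simp

end ConservationLaw

theorem HasFDerivAt.hasDerivAt_curry_fst {E : Type*} [NormedAddCommGroup E] [NormedSpace ℝ E]
    {f : ℝ → ℝ → E} {L : ℝ × ℝ →L[ℝ] E} {x t : ℝ}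
    (hf : HasFDerivAt (Function.uncurry f) L (x, t)) :
    HasDerivAt (fun ξ => f ξ t) (L (1, 0)) x :=
  hf.comp_hasDerivAt (f := fun ξ => (ξ, t)) x ((hasDerivAt_id x).prodMk (hasDerivAt_const x t))

theorem HasFDerivAt.hasDerivAt_curry_snd {E : Type*} [NormedAddCommGroup E] [NormedSpace ℝ E]
    {f : ℝ → ℝ → E} {L : ℝ × ℝ →L[ℝ] E} {x t : ℝ}
    (hf : HasFDerivAt (Function.uncurry f) L (x, t)) :
    HasDerivAt (fun τ => f x τ) (L (0, 1)) t :=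
  hf.comp_hasDerivAt (f := fun τ => (x, τ)) t ((hasDerivAt_const t x).prodMk (hasDerivAt_id t))

theorem inner_dirac_rhs_add_eq_zero (a b : ℂ) (m A B : ℝ) :
    inner ℝ a (-Complex.I * (m : ℂ) * b + Complex.I * (A : ℂ) * a
        + 2 * Complex.I * ((‖b‖ ^ 2 : ℝ) : ℂ) * a
        + 2 * Complex.I * (((a * (starRingEnd ℂ) b).re : ℝ) : ℂ) * b)
    + inner ℝ b (-Complex.I * (m : ℂ) * a + Complex.I * (B : ℂ) * b
        + 2 * Complex.I * ((‖a‖ ^ 2 : ℝ) : ℂ) * b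
        + 2 * Complex.I * (((a * (starRingEnd ℂ) b).re : ℝ) : ℂ) * a) = 0 := by
  simp [Complex.inner, Complex.mul_re, Complex.mul_im, pow_two]
  ring

noncomputable def chargeDensity (u v : ℝ → ℝ → ℂ) (p : ℝ × ℝ) : ℝ :=
  ‖Function.uncurry u p‖ ^ 2 + ‖Function.uncurry v p‖ ^ 2

noncomputable def chargeCurrent (u v : ℝ → ℝ → ℂ) (p : ℝ × ℝ) : ℝ :=
  ‖Function.uncurry u p‖ ^ 2 - ‖Function.uncurry v p‖ ^ 2

theorem DiracSystem.charge_conservation {m T : ℝ} {A₀ A₁ : ℝ → ℝ → ℝ} {u v : ℝ → ℝ → ℂ}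
    (hu : ContDiff ℝ 1 (Function.uncurry u)) (hv : ContDiff ℝ 1 (Function.uncurry v))
    (hsol : DiracSystem m T A₀ A₁ u v) (y : ℝ) {s : ℝ} (hs : s ∈ Icc 0 T) :
    fderiv ℝ (chargeDensity u v) (y, s) (0, 1)
      + fderiv ℝ (chargeCurrent u v) (y, s) (1, 0) = 0 := by
  have hDu := (hu.differentiable one_ne_zero (y, s)).hasFDerivAt
  have hDv := (hv.differentiable one_ne_zero (y, s)).hasFDerivAt
  obtain ⟨hu_eq, hv_eq⟩ := hsol y s hs
  rw [hDu.hasDerivAt_curry_snd.deriv, hDu.hasDerivAt_curry_fst.deriv] at hu_eq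
  rw [hDv.hasDerivAt_curry_snd.deriv, hDv.hasDerivAt_curry_fst.deriv] at hv_eq
  have hρ : HasFDerivAt (chargeDensity u v) _ (y, s) := hDu.norm_sq.add hDv.norm_sq
  have hj : HasFDerivAt (chargeCurrent u v) _ (y, s) := hDu.norm_sq.sub hDv.norm_sq
  rw [hρ.fderiv, hj.fderiv]
  calc _ = 2 * (inner ℝ (u y s) (fderiv ℝ (Function.uncurry u) (y, s) (0, 1)
              + fderiv ℝ (Function.uncurry u) (y, s) (1, 0))
            + inner ℝ (v y s) (fderiv ℝ (Function.uncurry v) (y, s) (0, 1)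
              - fderiv ℝ (Function.uncurry v) (y, s) (1, 0))) := by
        simp only [add_apply, sub_apply, smul_apply, ContinuousLinearMap.comp_apply,
          innerSL_apply_apply, inner_add_right, inner_sub_right, Function.uncurry_apply_pair,
          nsmul_eq_mul]
        ring
    _ = 0 := by
        rw [hu_eq, hv_eq, inner_dirac_rhs_add_eq_zero, mul_zero]

theorem local_charge_identity_general (T m : ℝ) (A₀ A₁ : ℝ → ℝ → ℝ) (u v : ℝ → ℝ → ℂ)
    (hu : ContDiff ℝ 1 (Function.uncurry u)) (hv : ContDiff ℝ 1 (Function.uncurry v))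
    (hsol : DiracSystem m T A₀ A₁ u v) :
    ∀ x : ℝ, ∀ t ∈ Set.Icc (0:ℝ) T,
      (∫ s in (0:ℝ)..t, 2 * ‖u (x + t - s) s‖ ^ 2)
        + (∫ s in (0:ℝ)..t, 2 * ‖v (x - t + s) s‖ ^ 2)
        = ∫ y in (x - t)..(x + t), (‖u y 0‖ ^ 2 + ‖v y 0‖ ^ 2) := by
  intro x t ht
  have hcharge := integral_lightCone_eq_of_conservation (ρ := chargeDensity u v)
    (j := chargeCurrent u v) (x := x)
    ((hu.norm_sq ℝ).add (hv.norm_sq ℝ)) ((hu.norm_sq ℝ).sub (hv.norm_sq ℝ)) ht.1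
    fun y s hs => hsol.charge_conservation hu hv y ⟨hs.1, hs.2.trans ht.2⟩
  simp only [chargeDensity, chargeCurrent, Function.uncurry_apply_pair] at hcharge
  convert hcharge using 2 <;> congr 1 with s <;> ring

/-- Local conservation of charge on backward light cones: for `C¹` solutions of the
Dirac system, for every `x ∈ ℝ` and `t ∈ [0,T]`,
`∫₀^t 2|u(x+t−s,s)|² ds + ∫₀^t 2|v(x−t+s,s)|² ds = ∫_{x−t}^{x+t} (|u(y,0)|² + |v(y,0)|²) dy`. -/
theorem local_charge_identity (T m : ℝ) (hT : 0 < T) (hm : 0 ≤ m)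
    (A₀ A₁ : ℝ → ℝ → ℝ) (hA₀ : Continuous (Function.uncurry A₀))
    (hA₁ : Continuous (Function.uncurry A₁))
    (u v : ℝ → ℝ → ℂ)
    (hu : ContDiff ℝ 1 (Function.uncurry u)) (hv : ContDiff ℝ 1 (Function.uncurry v))
    (hsol : DiracSystem m T A₀ A₁ u v) :
    ∀ x : ℝ, ∀ t ∈ Set.Icc (0:ℝ) T,
      (∫ s in (0:ℝ)..t, 2 * ‖u (x + t - s) s‖ ^ 2)
        + (∫ s in (0:ℝ)..t, 2 * ‖v (x - t + s) s‖ ^ 2)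
        = ∫ y in (x - t)..(x + t), (‖u y 0‖ ^ 2 + ‖v y 0‖ ^ 2) :=
  local_charge_identity_general T m A₀ A₁ u v hu hv hsol
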